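/- Eigenvalue monotonicity can fail for non-integer θ: for λ = (2,2,1) and μ = (2,1,1,1), partitions of 5, λ strictly dominates μ, but for any θ ∈ (1, 3/2) one has |∏_b (θ + c^λ(b))| < |∏_b (θ + c^μ(b))|, since the ratio of absolute values equals θ/(3−θ) < 1. -/

import Mathlib

/-!
Both diagrams share the cells of contents `0, 1, -1, -2`; the remaining cell has content `0`
in `(2,2,1)` and `-3` in `(2,1,1,1)`. The content polynomials therefore differ by the factor
`θ / (θ - 3)`, whose absolute value is below `1` exactly when `θ < 3/2` (for `θ > 0`).
-/

open Finset

/-- Young diagram of a partition -/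
def toYD {n : ℕ} (p : Nat.Partition n) : YoungDiagram :=
  YoungDiagram.ofRowLens (p.parts.sort (· ≥ ·)) ((Multiset.pairwise_sort p.parts (· ≥ ·)).sortedGE)

/-- dominance order on partitions of `n` -/
def Dominates {n : ℕ} (p q : Nat.Partition n) : Prop :=
  ∀ j, ((q.parts.sort (· ≥ ·)).take j).sum ≤ ((p.parts.sort (· ≥ ·)).take j).sum

theorem Multiset.sort_coe_of_pairwise {α : Type*} (r : α → α → Prop) [DecidableRel r]
    [IsTrans α r] [Std.Antisymm r] [Std.Total r] {l : List α} (hl : l.Pairwise r) :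
    (l : Multiset α).sort r = l :=
  List.mergeSort_eq_self _ hl

theorem sort_parts_eq_of_parts_eq {n : ℕ} {p : Nat.Partition n} {l : List ℕ}
    (hl : l.Pairwise (· ≥ ·)) (hp : p.parts = l) : p.parts.sort (· ≥ ·) = l := by
  rw [hp, Multiset.sort_coe_of_pairwise _ hl]

theorem toYD_eq_ofRowLens {n : ℕ} {p : Nat.Partition n} {l : List ℕ}
    (hl : l.Pairwise (· ≥ ·)) (hp : p.parts = l) :
    toYD p = YoungDiagram.ofRowLens l hl.sortedGE := by
  simp only [toYD, sort_parts_eq_of_parts_eq hl hp]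

theorem prod_content_ofRowLens_221 (θ : ℝ) :
    ∏ b ∈ (YoungDiagram.ofRowLens [2, 2, 1] (by decide)).cells, (θ + b.2 - b.1) =
      θ ^ 2 * (θ + 1) * (θ - 1) * (θ - 2) := by
  have hcells : (YoungDiagram.ofRowLens [2, 2, 1] (by decide)).cells =
      {(0, 0), (0, 1), (1, 0), (1, 1), (2, 0)} := by decide
  rw [hcells]
  norm_num [Finset.prod_insert, Prod.ext_iff]
  ring

theorem prod_content_ofRowLens_2111 (θ : ℝ) :
    ∏ b ∈ (YoungDiagram.ofRowLens [2, 1, 1, 1] (by decide)).cells, (θ + b.2 - b.1) =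
      θ * (θ + 1) * (θ - 1) * (θ - 2) * (θ - 3) := by
  have hcells : (YoungDiagram.ofRowLens [2, 1, 1, 1] (by decide)).cells =
      {(0, 0), (0, 1), (1, 0), (2, 0), (3, 0)} := by decide
  rw [hcells]
  norm_num [Finset.prod_insert, Prod.ext_iff]
  ring

theorem abs_prod_content_ratio (θ : ℝ) (h : θ * (θ + 1) * (θ - 1) * (θ - 2) ≠ 0) :
    |θ ^ 2 * (θ + 1) * (θ - 1) * (θ - 2)| / |θ * (θ + 1) * (θ - 1) * (θ - 2) * (θ - 3)| =
      |θ| / |θ - 3| := by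
  have hcommon : 0 < |θ * (θ + 1) * (θ - 1) * (θ - 2)| := abs_pos.mpr h
  calc |θ ^ 2 * (θ + 1) * (θ - 1) * (θ - 2)| / |θ * (θ + 1) * (θ - 1) * (θ - 2) * (θ - 3)|
      = (|θ * (θ + 1) * (θ - 1) * (θ - 2)| * |θ|) /
          (|θ * (θ + 1) * (θ - 1) * (θ - 2)| * |θ - 3|) := by
        rw [← abs_mul, ← abs_mul]; ring_nf
    _ = |θ| / |θ - 3| := mul_div_mul_left _ _ hcommon.ne'

theorem dominates_221_2111 (p q : Nat.Partition 5)
    (hp : p.parts = {2, 2, 1}) (hq : q.parts = {2, 1, 1, 1}) : Dominates p q := by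
  intro j
  rw [sort_parts_eq_of_parts_eq (l := [2, 2, 1]) (by decide) hp,
    sort_parts_eq_of_parts_eq (l := [2, 1, 1, 1]) (by decide) hq]
  rcases lt_or_ge j 4 with hj | hj
  · interval_cases j <;> decide
  · rw [List.take_of_length_le (by simp; omega), List.take_of_length_le (by simp; omega)]
    decide

/-- Counterexample to eigenvalue monotonicity for non-integer parameter:
`λ = (2,2,1)` strictly dominates `μ = (2,1,1,1)`, but for `θ ∈ (1, 3/2)` the content
polynomial of `λ` is strictly smaller in absolute value than that of `μ`; indeed the
ratio of the absolute values is `θ/(3−θ) < 1`. -/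
theorem stmt8 (p q : Nat.Partition 5)
    (hp : p.parts = {2, 2, 1}) (hq : q.parts = {2, 1, 1, 1}) :
    (Dominates p q ∧ p ≠ q) ∧
    ∀ θ : ℝ, 1 < θ → θ < 3 / 2 →
      |∏ b ∈ (toYD p).cells, (θ + b.2 - b.1)| <
        |∏ b ∈ (toYD q).cells, (θ + b.2 - b.1)| ∧
      |∏ b ∈ (toYD p).cells, (θ + b.2 - b.1)| /
        |∏ b ∈ (toYD q).cells, (θ + b.2 - b.1)| = θ / (3 - θ) ∧
      θ / (3 - θ) < 1 := by
  refine ⟨⟨dominates_221_2111 p q hp hq, fun h => absurd (h ▸ hp) (hq ▸ by decide)⟩, ?_⟩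
  intro θ h1 h2
  rw [toYD_eq_ofRowLens (l := [2, 2, 1]) (by decide) hp,
    toYD_eq_ofRowLens (l := [2, 1, 1, 1]) (by decide) hq,
    prod_content_ofRowLens_221, prod_content_ofRowLens_2111]
  have hcommon : θ * (θ + 1) * (θ - 1) * (θ - 2) ≠ 0 := by
    refine mul_ne_zero (mul_ne_zero (mul_ne_zero ?_ ?_) ?_) ?_ <;> intro h <;> linarith
  have hden : 0 < |θ * (θ + 1) * (θ - 1) * (θ - 2) * (θ - 3)| :=
    abs_pos.mpr (mul_ne_zero hcommon (by intro h; linarith))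
  have heq : |θ| / |θ - 3| = θ / (3 - θ) := by
    rw [abs_of_pos (by linarith), abs_of_neg (by linarith), neg_sub]
  have hratio := (abs_prod_content_ratio θ hcommon).trans heq
  have hlt : θ / (3 - θ) < 1 := (div_lt_one (by linarith)).mpr (by linarith)
  exact ⟨(div_lt_one hden).mp (hratio ▸ hlt), hratio, hlt⟩
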